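/- arXiv:1602.01279 — 2 statements merged into one kernel-verified Lean document; each statement's English description precedes it below -/
import Mathlib

section
/- Let η > 0, k ≥ 0, m ≥ 0. Let Λ : [0,∞) → [0,∞) and let g, h : [0,∞) → ℝ be locally integrable functions such that: (i) Λ(t) = Λ(0) + ∫₀ᵗ g(τ)dτ for all t ≥ 0 (so Λ is absolutely continuous with derivative g almost everywhere); (ii) g(t) + 2ηΛ(t) ≤ h(t)Λ(t) + k for almost every t ≥ 0; and (iii) ∫ₛᵗ h(τ)dτ ≤ η(t − s) + m for all 0 ≤ s ≤ t. Then for all t ≥ 0, Λ(t) ≤ Λ(0)·e^m·e^{−ηt} + k·e^m/η. -/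
open MeasureTheory intervalIntegral Real

open Nat

lemma swap_primitive {a b : ℝ → ℝ} {T : ℝ} (hT : 0 ≤ T)
    (ha : IntervalIntegrable a volume 0 T) (hb : IntervalIntegrable b volume 0 T) :
    (∫ s in (0:ℝ)..T, a s * ∫ u in (0:ℝ)..s, b u)
      = ∫ s in (0:ℝ)..T, b s * ∫ u in s..T, a u := by
  have ha' : IntegrableOn a (Set.Ioc 0 T) volume :=
    (intervalIntegrable_iff_integrableOn_Ioc_of_le hT).mp ha
  have hb' : IntegrableOn b (Set.Ioc 0 T) volume :=
    (intervalIntegrable_iff_integrableOn_Ioc_of_le hT).mp hb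
  set μ := volume.restrict (Set.Ioc (0:ℝ) T) with hμ
  set F : ℝ → ℝ → ℝ := fun s u => if u ≤ s then a s * b u else 0 with hF
  have hFint : Integrable (Function.uncurry F) (μ.prod μ) := by
    have h1 : Integrable (fun p : ℝ × ℝ => a p.1 * b p.2) (μ.prod μ) :=
      ha'.mul_prod hb'
    have h2 : MeasurableSet {p : ℝ × ℝ | p.2 ≤ p.1} :=
      measurableSet_le measurable_snd measurable_fst
    have : Function.uncurry F = {p : ℝ × ℝ | p.2 ≤ p.1}.indicator
        (fun p : ℝ × ℝ => a p.1 * b p.2) := by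
      ext p
      simp [Function.uncurry, hF, Set.indicator_apply]
    rw [this]
    exact h1.indicator h2
  have key : (∫ s, ∫ u, F s u ∂μ ∂μ) = ∫ u, ∫ s, F s u ∂μ ∂μ :=
    integral_integral_swap hFint
  have lhs_eq : (∫ s, ∫ u, F s u ∂μ ∂μ) = ∫ s in (0:ℝ)..T, a s * ∫ u in (0:ℝ)..s, b u := by
    rw [intervalIntegral.integral_of_le hT, hμ]
    apply setIntegral_congr_fun measurableSet_Ioc
    intro s hs
    show (∫ u, F s u ∂μ) = a s * ∫ u in (0:ℝ)..s, b u
    have h4 : ∀ u, F s u = a s * (Set.Iic s).indicator b u := by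
      intro u
      simp [hF, Set.indicator_apply, mul_ite, Set.mem_Iic]
    simp_rw [h4]
    rw [hμ, MeasureTheory.integral_const_mul, setIntegral_indicator measurableSet_Iic]
    have hset : Set.Ioc 0 T ∩ Set.Iic s = Set.Ioc 0 s := by
      ext u
      constructor
      · rintro ⟨hu1, hu2⟩; exact ⟨hu1.1, hu2⟩
      · rintro ⟨hu1, hu2⟩; exact ⟨⟨hu1, hu2.trans hs.2⟩, hu2⟩
    rw [hset, intervalIntegral.integral_of_le hs.1.le]
  have rhs_eq : (∫ u, ∫ s, F s u ∂μ ∂μ) = ∫ s in (0:ℝ)..T, b s * ∫ u in s..T, a u := by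
    rw [intervalIntegral.integral_of_le hT, hμ]
    apply setIntegral_congr_fun measurableSet_Ioc
    intro u hu
    show (∫ s, F s u ∂μ) = b u * ∫ s in u..T, a s
    have h3 : ∀ s, F s u = b u * (Set.Ici u).indicator a s := by
      intro s
      simp only [hF, Set.indicator_apply, Set.mem_Ici, mul_ite, mul_zero]
      split_ifs with h1
      · ring
      · rfl
    simp_rw [h3]
    rw [hμ, MeasureTheory.integral_const_mul, setIntegral_indicator measurableSet_Ici]
    have hset : Set.Ioc 0 T ∩ Set.Ici u = Set.Icc u T := by
      ext s
      constructor
      · rintro ⟨h1, h2⟩; exact ⟨h2, h1.2⟩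
      · rintro ⟨h1, h2⟩; exact ⟨⟨hu.1.trans_le h1, h2⟩, h1⟩
    rw [hset, MeasureTheory.integral_Icc_eq_integral_Ioc,
      intervalIntegral.integral_of_le hu.2]
  rw [← lhs_eq, key, rhs_eq]

lemma prod_rule {a b : ℝ → ℝ} {A0 B0 T : ℝ} (hT : 0 ≤ T)
    (ha : IntervalIntegrable a volume 0 T) (hb : IntervalIntegrable b volume 0 T) :
    (A0 + ∫ s in (0:ℝ)..T, a s) * (B0 + ∫ s in (0:ℝ)..T, b s)
      = A0 * B0 + ∫ s in (0:ℝ)..T,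
          (a s * (B0 + ∫ u in (0:ℝ)..s, b u) + (A0 + ∫ u in (0:ℝ)..s, a u) * b s) := by
  have hIcc : Set.uIcc (0:ℝ) T = Set.Icc 0 T := Set.uIcc_of_le hT
  have hPb : ContinuousOn (fun s => ∫ u in (0:ℝ)..s, b u) (Set.uIcc 0 T) :=
    intervalIntegral.continuousOn_primitive_interval' hb (by rw [hIcc]; exact ⟨le_rfl, hT⟩)
  have hPa : ContinuousOn (fun s => ∫ u in (0:ℝ)..s, a u) (Set.uIcc 0 T) :=
    intervalIntegral.continuousOn_primitive_interval' ha (by rw [hIcc]; exact ⟨le_rfl, hT⟩)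
  have i1 : IntervalIntegrable (fun s => a s * (B0 + ∫ u in (0:ℝ)..s, b u)) volume 0 T :=
    ha.mul_continuousOn (continuousOn_const.add hPb)
  have i2 : IntervalIntegrable (fun s => (A0 + ∫ u in (0:ℝ)..s, a u) * b s) volume 0 T :=
    hb.continuousOn_mul (continuousOn_const.add hPa)
  rw [intervalIntegral.integral_add i1 i2]
  have e1 : (∫ s in (0:ℝ)..T, a s * (B0 + ∫ u in (0:ℝ)..s, b u))
      = B0 * (∫ s in (0:ℝ)..T, a s) + ∫ s in (0:ℝ)..T, a s * ∫ u in (0:ℝ)..s, b u := by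
    have : ∀ s, a s * (B0 + ∫ u in (0:ℝ)..s, b u)
        = B0 * a s + a s * ∫ u in (0:ℝ)..s, b u := fun s => by ring
    simp_rw [this]
    rw [intervalIntegral.integral_add (ha.const_mul B0)
      (ha.mul_continuousOn hPb), intervalIntegral.integral_const_mul]
  have e2 : (∫ s in (0:ℝ)..T, (A0 + ∫ u in (0:ℝ)..s, a u) * b s)
      = A0 * (∫ s in (0:ℝ)..T, b s) + ∫ s in (0:ℝ)..T, b s * ∫ u in (0:ℝ)..s, a u := by
    have : ∀ s, (A0 + ∫ u in (0:ℝ)..s, a u) * b s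
        = A0 * b s + b s * ∫ u in (0:ℝ)..s, a u := fun s => by ring
    simp_rw [this]
    rw [intervalIntegral.integral_add (hb.const_mul A0)
      (hb.mul_continuousOn hPa), intervalIntegral.integral_const_mul]
  rw [e1, e2, swap_primitive hT ha hb]
  have e3 : ∀ s ∈ Set.uIcc (0:ℝ) T,
      (∫ u in s..T, a u) = (∫ u in (0:ℝ)..T, a u) - ∫ u in (0:ℝ)..s, a u := by
    intro s hs
    rw [hIcc] at hs
    rw [eq_sub_iff_add_eq, add_comm,
      intervalIntegral.integral_add_adjacent_intervals
        (ha.mono_set (by rw [Set.uIcc_of_le hs.1, hIcc]; exact Set.Icc_subset_Icc_right hs.2))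
        (ha.mono_set (by rw [Set.uIcc_of_le hs.2, hIcc]; exact Set.Icc_subset_Icc_left hs.1))]
  have e4 : (∫ s in (0:ℝ)..T, b s * ∫ u in s..T, a u)
      = (∫ u in (0:ℝ)..T, a u) * (∫ s in (0:ℝ)..T, b s)
        - ∫ s in (0:ℝ)..T, b s * ∫ u in (0:ℝ)..s, a u := by
    have heq : Set.EqOn (fun s => b s * ∫ u in s..T, a u)
        (fun s => b s * ((∫ u in (0:ℝ)..T, a u) - ∫ u in (0:ℝ)..s, a u)) (Set.uIcc 0 T) :=
      fun s hs => by simp only []; rw [e3 s hs]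
    rw [intervalIntegral.integral_congr heq]
    have : ∀ s, b s * ((∫ u in (0:ℝ)..T, a u) - ∫ u in (0:ℝ)..s, a u)
        = (∫ u in (0:ℝ)..T, a u) * b s - b s * ∫ u in (0:ℝ)..s, a u := fun s => by ring
    simp_rw [this]
    rw [intervalIntegral.integral_sub (hb.const_mul _) (hb.mul_continuousOn hPa),
      intervalIntegral.integral_const_mul]
  linarith [e4]

lemma pow_primitive {v : ℝ → ℝ} (hv : ∀ t : ℝ, 0 ≤ t → IntervalIntegrable v volume 0 t)
    (n : ℕ) : ∀ T : ℝ, 0 ≤ T →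
    (∫ s in (0:ℝ)..T, v s) ^ (n + 1)
      = (n + 1 : ℝ) * ∫ s in (0:ℝ)..T, v s * (∫ u in (0:ℝ)..s, v u) ^ n := by
  induction n with
  | zero =>
    intro T hT
    simp
  | succ n ih =>
    intro T hT
    have hIcc : Set.uIcc (0:ℝ) T = Set.Icc 0 T := Set.uIcc_of_le hT
    have hPv : ContinuousOn (fun s => ∫ u in (0:ℝ)..s, v u) (Set.uIcc 0 T) :=
      intervalIntegral.continuousOn_primitive_interval' (hv T hT)
        (by rw [hIcc]; exact ⟨le_rfl, hT⟩)
    have hb : IntervalIntegrable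
        (fun s => (n + 1 : ℝ) * (v s * (∫ u in (0:ℝ)..s, v u) ^ n)) volume 0 T :=
      ((hv T hT).mul_continuousOn (hPv.pow n)).const_mul _
    have hIb : (∫ s in (0:ℝ)..T, (n + 1 : ℝ) * (v s * (∫ u in (0:ℝ)..s, v u) ^ n))
        = (∫ s in (0:ℝ)..T, v s) ^ (n + 1) := by
      rw [intervalIntegral.integral_const_mul, ← ih T hT]
    have key := prod_rule (A0 := 0) (B0 := 0) hT (hv T hT) hb
    rw [hIb] at key
    simp only [zero_add, zero_mul, mul_zero, add_zero] at key
    rw [pow_succ, mul_comm ((∫ s in (0:ℝ)..T, v s) ^ (n+1)), key]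
    have heq : Set.EqOn
        (fun s => (v s * ∫ u in (0:ℝ)..s, (n + 1 : ℝ) * (v u * (∫ u_1 in (0:ℝ)..u, v u_1) ^ n))
          + (∫ u in (0:ℝ)..s, v u) * ((n + 1 : ℝ) * (v s * (∫ u in (0:ℝ)..s, v u) ^ n)))
        (fun s => ((n:ℝ) + 1 + 1) * (v s * (∫ u in (0:ℝ)..s, v u) ^ (n + 1)))
        (Set.uIcc 0 T) := by
      intro s hs
      rw [hIcc] at hs
      simp only []
      have h1 : (∫ u in (0:ℝ)..s, (n + 1 : ℝ) * (v u * (∫ u_1 in (0:ℝ)..u, v u_1) ^ n))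
          = (∫ u in (0:ℝ)..s, v u) ^ (n + 1) := by
        rw [intervalIntegral.integral_const_mul, ← ih s hs.1]
      rw [h1]
      ring
    rw [intervalIntegral.integral_congr heq, intervalIntegral.integral_const_mul]
    push_cast
    ring

lemma exp_primitive {v : ℝ → ℝ} (hv : ∀ t : ℝ, 0 ≤ t → IntervalIntegrable v volume 0 t)
    {T : ℝ} (hT : 0 ≤ T) :
    Real.exp (∫ s in (0:ℝ)..T, v s)
      = 1 + ∫ s in (0:ℝ)..T, v s * Real.exp (∫ u in (0:ℝ)..s, v u) := by
  have hexp : ∀ x : ℝ, HasSum (fun n : ℕ => x ^ n / n !) (Real.exp x) := fun x => by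
    rw [Real.exp_eq_exp_ℝ]
    exact NormedSpace.expSeries_div_hasSum_exp x
  set w : ℝ → ℝ := fun s => ∫ u in (0:ℝ)..s, v u with hw
  have hIcc : Set.uIcc (0:ℝ) T = Set.Icc 0 T := Set.uIcc_of_le hT
  have hPv : ContinuousOn w (Set.uIcc 0 T) :=
    intervalIntegral.continuousOn_primitive_interval' (hv T hT)
      (by rw [hIcc]; exact ⟨le_rfl, hT⟩)
  obtain ⟨M, hM⟩ := isCompact_uIcc.exists_bound_of_continuousOn hPv
  have hM0 : 0 ≤ M := le_trans (norm_nonneg _) (hM 0 Set.left_mem_uIcc)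
  set μ := volume.restrict (Set.Ioc (0:ℝ) T) with hμ
  set F : ℕ → ℝ → ℝ := fun n s => v s * w s ^ n / n ! with hF
  have hFii : ∀ n : ℕ, IntervalIntegrable (F n) volume 0 T := fun n =>
    ((hv T hT).mul_continuousOn (hPv.pow n)).div_const _
  have hFint : ∀ n : ℕ, Integrable (F n) μ := fun n =>
    (intervalIntegrable_iff_integrableOn_Ioc_of_le hT).mp (hFii n)
  have hvint : Integrable v μ :=
    (intervalIntegrable_iff_integrableOn_Ioc_of_le hT).mp (hv T hT)
  have hnorm : ∀ n : ℕ, (∫ s, ‖F n s‖ ∂μ) ≤ M ^ n / n ! * ∫ s, ‖v s‖ ∂μ := by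
    intro n
    rw [← MeasureTheory.integral_const_mul]
    refine integral_mono_ae (hFint n).norm ((hvint.norm).const_mul _) ?_
    filter_upwards [ae_restrict_mem measurableSet_Ioc] with s hs
    have hsIcc : s ∈ Set.uIcc (0:ℝ) T := by
      rw [hIcc]; exact ⟨hs.1.le, hs.2⟩
    have h1 : ‖F n s‖ = ‖v s‖ * ‖w s‖ ^ n / n ! := by
      rw [hF]
      simp [norm_div, norm_mul, norm_pow, Nat.abs_cast]
    rw [h1]
    have h2 : ‖w s‖ ^ n ≤ M ^ n := pow_le_pow_left₀ (norm_nonneg _) (hM s hsIcc) n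
    have h3 : (0:ℝ) < n ! := by positivity
    calc ‖v s‖ * ‖w s‖ ^ n / n ! ≤ ‖v s‖ * M ^ n / n ! := by
          gcongr
      _ = M ^ n / n ! * ‖v s‖ := by ring
  have hsum : Summable fun n : ℕ => ∫ s, ‖F n s‖ ∂μ := by
    refine Summable.of_nonneg_of_le (fun n => integral_nonneg fun s => norm_nonneg _)
      hnorm ?_
    exact (Real.summable_pow_div_factorial M).mul_right _
  have hHS := MeasureTheory.hasSum_integral_of_summable_integral_norm hFint hsum
  have hpt : ∀ s : ℝ, (∑' n : ℕ, F n s) = v s * Real.exp (w s) := by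
    intro s
    have : ∀ n : ℕ, F n s = v s * (w s ^ n / n !) := fun n => by
      rw [hF]; ring
    simp_rw [this]
    exact ((hexp (w s)).mul_left (v s)).tsum_eq
  have hterm : ∀ n : ℕ, (∫ s, F n s ∂μ) = w T ^ (n + 1) / (n + 1)! := by
    intro n
    have h1 : (∫ s, F n s ∂μ) = ∫ s in (0:ℝ)..T, v s * w s ^ n / n ! := by
      rw [hμ, intervalIntegral.integral_of_le hT]
    have h3 := pow_primitive hv n T hT
    rw [h1, intervalIntegral.integral_div]
    simp only [hw]
    rw [Nat.factorial_succ]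
    push_cast
    rw [div_eq_div_iff (by positivity) (by positivity), h3]
    ring
  have htot : (∫ s, (∑' n, F n s) ∂μ) = ∫ s in (0:ℝ)..T, v s * Real.exp (w s) := by
    simp_rw [hpt]
    rw [hμ, intervalIntegral.integral_of_le hT]
  rw [funext hterm] at hHS
  rw [htot] at hHS
  have hshift : HasSum (fun n : ℕ => w T ^ (n + 1) / (n + 1)!)
      ((Real.exp (w T)) - 1) := by
    have := (hexp (w T))
    have h4 := (hasSum_nat_add_iff' (f := fun n : ℕ => w T ^ n / n !) 1).mpr this
    simpa using h4
  have hfin := hHS.unique hshift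
  simp only [hw] at hfin
  linarith [hfin]

/-- Grönwall-type inequality of Pata–Zelik.  Let `Λ : [0,∞) → [0,∞)` be absolutely
continuous with a.e. derivative `g`, so `Λ(t) = Λ(0) + ∫₀ᵗ g`, and suppose
`g(t) + 2ηΛ(t) ≤ h(t)Λ(t) + k` a.e. on `[0,∞)`, where
`∫ₛᵗ h(τ)dτ ≤ η(t-s) + m` for all `0 ≤ s ≤ t`.  Then
`Λ(t) ≤ Λ(0)e^m e^{-ηt} + k e^m/η` for all `t ≥ 0`. -/
theorem pata_zelik_gronwall
    (η k m : ℝ) (hη : 0 < η) (hk : 0 ≤ k) (hm : 0 ≤ m)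
    (Λ g h : ℝ → ℝ)
    (hΛnonneg : ∀ t : ℝ, 0 ≤ t → 0 ≤ Λ t)
    (hgloc : ∀ t : ℝ, 0 ≤ t → IntervalIntegrable g volume 0 t)
    (hhloc : ∀ t : ℝ, 0 ≤ t → IntervalIntegrable h volume 0 t)
    (hΛ : ∀ t : ℝ, 0 ≤ t → Λ t = Λ 0 + ∫ τ in (0 : ℝ)..t, g τ)
    (hdiff : ∀ᵐ t ∂(volume.restrict (Set.Ici (0 : ℝ))),
      g t + 2 * η * Λ t ≤ h t * Λ t + k)
    (hint : ∀ s t : ℝ, 0 ≤ s → s ≤ t → (∫ τ in s..t, h τ) ≤ η * (t - s) + m) :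
    ∀ t : ℝ, 0 ≤ t → Λ t ≤ Λ 0 * Real.exp m * Real.exp (-η * t) + k * Real.exp m / η := by
  intro t ht
  set v : ℝ → ℝ := fun τ => 2 * η - h τ with hv
  have hvloc : ∀ T : ℝ, 0 ≤ T → IntervalIntegrable v volume 0 T := fun T hT =>
    intervalIntegrable_const.sub (hhloc T hT)
  set w : ℝ → ℝ := fun s => ∫ u in (0:ℝ)..s, v u with hw
  set E : ℝ → ℝ := fun s => Real.exp (w s) with hE
  have hEpos : ∀ s, 0 < E s := fun s => Real.exp_pos _
  have hEeq : ∀ s : ℝ, 0 ≤ s → E s = 1 + ∫ u in (0:ℝ)..s, v u * E u := fun s hs => by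
    simpa only [hE, hw] using exp_primitive hvloc hs
  have hIcc : Set.uIcc (0:ℝ) t = Set.Icc 0 t := Set.uIcc_of_le ht
  have h0mem : (0:ℝ) ∈ Set.uIcc (0:ℝ) t := Set.left_mem_uIcc
  have hPw : ContinuousOn w (Set.uIcc 0 t) :=
    intervalIntegral.continuousOn_primitive_interval' (hvloc t ht) h0mem
  have hPE : ContinuousOn E (Set.uIcc 0 t) := Real.continuous_exp.comp_continuousOn hPw
  have hΛcont : ContinuousOn Λ (Set.uIcc 0 t) := by
    have hPg : ContinuousOn (fun s => Λ 0 + ∫ u in (0:ℝ)..s, g u) (Set.uIcc 0 t) :=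
      continuousOn_const.add
        (intervalIntegral.continuousOn_primitive_interval' (hgloc t ht) h0mem)
    exact hPg.congr fun s hs => hΛ s (by rw [hIcc] at hs; exact hs.1)
  have hbii : IntervalIntegrable (fun s => v s * E s) volume 0 t :=
    (hvloc t ht).mul_continuousOn hPE
  have key := prod_rule (A0 := Λ 0) (B0 := 1) ht (hgloc t ht) hbii
  have hb_eqon : Set.EqOn
      (fun s => g s * (1 + ∫ u in (0:ℝ)..s, v u * E u)
        + (Λ 0 + ∫ u in (0:ℝ)..s, g u) * (v s * E s))
      (fun s => (g s + v s * Λ s) * E s) (Set.uIcc 0 t) := by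
    intro s hs
    rw [hIcc] at hs
    simp only []
    rw [← hEeq s hs.1, ← hΛ s hs.1]
    ring
  rw [intervalIntegral.integral_congr hb_eqon] at key
  have keyt : Λ t * E t = Λ 0 + ∫ s in (0:ℝ)..t, (g s + v s * Λ s) * E s := by
    rw [hΛ t ht, hEeq t ht, key, mul_one]
  have hGint : IntervalIntegrable (fun s => (g s + v s * Λ s) * E s) volume 0 t :=
    ((hgloc t ht).add ((hvloc t ht).mul_continuousOn hΛcont)).mul_continuousOn hPE
  have hkEint : IntervalIntegrable (fun s => k * E s) volume 0 t :=
    (continuousOn_const.mul hPE).intervalIntegrable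
  have hmono : (∫ s in (0:ℝ)..t, (g s + v s * Λ s) * E s) ≤ ∫ s in (0:ℝ)..t, k * E s := by
    refine intervalIntegral.integral_mono_ae_restrict ht hGint hkEint ?_
    have hdiff' : ∀ᵐ s ∂(volume.restrict (Set.Icc (0:ℝ) t)),
        g s + 2 * η * Λ s ≤ h s * Λ s + k :=
      ae_mono (Measure.restrict_mono Set.Icc_subset_Ici_self le_rfl) hdiff
    filter_upwards [hdiff'] with s hs
    have h1 : g s + v s * Λ s ≤ k := by
      simp only [hv]
      nlinarith [hs]
    exact mul_le_mul_of_nonneg_right h1 (hEpos s).le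
  have hkey2 : Λ t * E t ≤ Λ 0 + ∫ s in (0:ℝ)..t, k * E s := by
    rw [keyt]; linarith [hmono]
  have hΛt : Λ t ≤ (Λ 0 + ∫ s in (0:ℝ)..t, k * E s) * (E t)⁻¹ := by
    rw [← le_div_iff₀ (hEpos t)] at hkey2
    rw [div_eq_mul_inv] at hkey2
    exact hkey2
  -- bound for w
  have hwsub : ∀ s : ℝ, 0 ≤ s → s ≤ t → w s - w t ≤ m - η * (t - s) := by
    intro s hs hst
    have hsub1 : IntervalIntegrable v volume 0 s := hvloc s hs
    have hsub2 : IntervalIntegrable v volume s t :=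
      (hvloc t ht).mono_set (by
        rw [Set.uIcc_of_le hst, hIcc]; exact Set.Icc_subset_Icc_left hs)
    have hadd : w s + (∫ u in s..t, v u) = w t :=
      intervalIntegral.integral_add_adjacent_intervals hsub1 hsub2
    have hhsub : IntervalIntegrable h volume s t :=
      (hhloc t ht).mono_set (by
        rw [Set.uIcc_of_le hst, hIcc]; exact Set.Icc_subset_Icc_left hs)
    have hvint : (∫ u in s..t, v u) = 2 * η * (t - s) - ∫ u in s..t, h u := by
      simp only [hv]
      rw [intervalIntegral.integral_sub intervalIntegrable_const hhsub]
      simp only [intervalIntegral.integral_const, smul_eq_mul]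
      ring
    have hh := hint s t hs hst
    have : w t - w s = 2 * η * (t - s) - ∫ u in s..t, h u := by
      rw [← hadd, hvint]; ring
    linarith [this, hh]
  -- first term
  have hwt : -(w t) ≤ m - η * t := by
    have := hwsub 0 le_rfl ht
    have hw0 : w 0 = 0 := by simp [hw]
    rw [hw0] at this
    linarith [this]
  have hterm1 : Λ 0 * (E t)⁻¹ ≤ Λ 0 * Real.exp m * Real.exp (-η * t) := by
    have hinv : (E t)⁻¹ = Real.exp (-(w t)) := by rw [hE]; simp [Real.exp_neg]
    rw [hinv, mul_assoc, ← Real.exp_add]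
    refine mul_le_mul_of_nonneg_left ?_ (hΛnonneg 0 le_rfl)
    exact Real.exp_le_exp.mpr (by linarith [hwt])
  -- second term
  have hterm2 : (∫ s in (0:ℝ)..t, k * E s) * (E t)⁻¹ ≤ k * Real.exp m / η := by
    rw [← intervalIntegral.integral_mul_const]
    have hle : (∫ s in (0:ℝ)..t, k * E s * (E t)⁻¹)
        ≤ ∫ s in (0:ℝ)..t, k * Real.exp m * Real.exp (-η * (t - s)) := by
      refine intervalIntegral.integral_mono_on ht
        (hkEint.mul_const _)
        (Continuous.intervalIntegrable
          (continuous_const.mul (Real.continuous_exp.comp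
            (continuous_const.mul (continuous_const.sub continuous_id)))) 0 t) ?_
      intro s hs
      have h2 : E s * (E t)⁻¹ = Real.exp (w s - w t) := by
        rw [hE]; simp [Real.exp_sub, div_eq_mul_inv]
      have h3 : Real.exp (w s - w t) ≤ Real.exp m * Real.exp (-η * (t - s)) := by
        rw [← Real.exp_add]
        exact Real.exp_le_exp.mpr (by linarith [hwsub s hs.1 hs.2])
      calc k * E s * (E t)⁻¹ = k * (E s * (E t)⁻¹) := by ring
        _ = k * Real.exp (w s - w t) := by rw [h2]
        _ ≤ k * (Real.exp m * Real.exp (-η * (t - s))) :=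
            mul_le_mul_of_nonneg_left h3 hk
        _ = k * Real.exp m * Real.exp (-η * (t - s)) := by ring
    have hcomp : (∫ s in (0:ℝ)..t, Real.exp (-η * (t - s)))
        = (Real.exp (-η * t) * (Real.exp (η * t) - 1)) / η := by
      have : ∀ s : ℝ, Real.exp (-η * (t - s)) = Real.exp (-η*t) * Real.exp (η * s) := by
        intro s; rw [← Real.exp_add]; ring_nf
      simp_rw [this]
      rw [intervalIntegral.integral_const_mul, intervalIntegral.integral_comp_mul_left
        (fun x => Real.exp x) hη.ne']
      simp [integral_exp, smul_eq_mul]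
      ring
    have heval : (∫ s in (0:ℝ)..t, k * Real.exp m * Real.exp (-η * (t - s)))
        ≤ k * Real.exp m / η := by
      rw [intervalIntegral.integral_const_mul, hcomp]
      have h5 : Real.exp (-η * t) * (Real.exp (η * t) - 1) ≤ 1 := by
        have : Real.exp (-η * t) * Real.exp (η * t) = 1 := by
          rw [← Real.exp_add]; simp
        nlinarith [Real.exp_pos (-η * t), this]
      have h6 : 0 ≤ k * Real.exp m := mul_nonneg hk (Real.exp_pos m).le
      have h7 : (0:ℝ) ≤ η⁻¹ := (inv_pos.mpr hη).le
      calc k * Real.exp m * (Real.exp (-η * t) * (Real.exp (η * t) - 1) / η)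
          = k * Real.exp m * (Real.exp (-η * t) * (Real.exp (η * t) - 1)) * η⁻¹ := by
            ring
        _ ≤ k * Real.exp m * 1 * η⁻¹ :=
            mul_le_mul_of_nonneg_right (mul_le_mul_of_nonneg_left h5 h6) h7
        _ = k * Real.exp m / η := by ring
    exact le_trans hle heval
  calc Λ t ≤ (Λ 0 + ∫ s in (0:ℝ)..t, k * E s) * (E t)⁻¹ := hΛt
    _ = Λ 0 * (E t)⁻¹ + (∫ s in (0:ℝ)..t, k * E s) * (E t)⁻¹ := by ring
    _ ≤ Λ 0 * Real.exp m * Real.exp (-η * t) + k * Real.exp m / η := add_le_add hterm1 hterm2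
end

section
/- Let (X,d) be a metric space and let S : [0,∞) → X → X satisfy the semigroup property S(t+s) = S(t) ∘ S(s) for all t, s ≥ 0 and S(0) = id, together with the Lipschitz estimate d(S(t)m₁, S(t)m₂) ≤ C·e^{Kt}·d(m₁,m₂) for all t ≥ 0 and m₁, m₂ ∈ X, where C ≥ 0 and K ≥ 0. Let M₁, M₂, M₃ be nonempty subsets of X and let C₁, C₂ ≥ 0 and α₁, α₂ > 0 be such that for all t ≥ 0: infDist(S(t)a, M₂) ≤ C₁e^{−α₁t} for every a ∈ M₁, and infDist(S(t)b, M₃) ≤ C₂e^{−α₂t} for every b ∈ M₂. Then for all t ≥ 0 and every a ∈ M₁, infDist(S(t)a, M₃) ≤ C′e^{−α′t}, where C′ = C·C₁ + C₂ and α′ = α₁α₂/(K + α₁ + α₂). -/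
open Real Metric

/-- Transitivity of exponential attraction (Fabrie–Galusinski–Miranville–Zelik).
If `S` is a semigroup on a metric space `X` satisfying
`d(S(t)m₁, S(t)m₂) ≤ C e^{Kt} d(m₁,m₂)`, and `M₁` is exponentially attracted to `M₂`
with rate `α₁` and constant `C₁`, while `M₂` is exponentially attracted to `M₃` with
rate `α₂` and constant `C₂`, then `M₁` is exponentially attracted to `M₃` with
constant `C′ = C·C₁ + C₂` and rate `α′ = α₁α₂/(K + α₁ + α₂)`. -/
theorem transitivity_exponential_attraction
    {X : Type*} [MetricSpace X] (S : ℝ → X → X)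
    (hsemigroup : ∀ t s : ℝ, 0 ≤ t → 0 ≤ s → S (t + s) = S t ∘ S s)
    (hid : S 0 = id)
    (C K : ℝ) (hC : 0 ≤ C) (hK : 0 ≤ K)
    (hLip : ∀ t : ℝ, 0 ≤ t → ∀ m₁ m₂ : X,
      dist (S t m₁) (S t m₂) ≤ C * Real.exp (K * t) * dist m₁ m₂)
    (M₁ M₂ M₃ : Set X) (hM₁ : M₁.Nonempty) (hM₂ : M₂.Nonempty) (hM₃ : M₃.Nonempty)
    (C₁ C₂ : ℝ) (hC₁ : 0 ≤ C₁) (hC₂ : 0 ≤ C₂)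
    (α₁ α₂ : ℝ) (hα₁ : 0 < α₁) (hα₂ : 0 < α₂)
    (hattr₁ : ∀ t : ℝ, 0 ≤ t → ∀ a ∈ M₁, infDist (S t a) M₂ ≤ C₁ * Real.exp (-α₁ * t))
    (hattr₂ : ∀ t : ℝ, 0 ≤ t → ∀ b ∈ M₂, infDist (S t b) M₃ ≤ C₂ * Real.exp (-α₂ * t)) :
    ∀ t : ℝ, 0 ≤ t → ∀ a ∈ M₁,
      infDist (S t a) M₃ ≤ (C * C₁ + C₂) * Real.exp (-(α₁ * α₂ / (K + α₁ + α₂)) * t) := by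
  intro t ht a ha
  set L : ℝ := K + α₁ + α₂ with hL
  have hLpos : 0 < L := by positivity
  set t₂ : ℝ := α₁ * t / L with ht₂def
  set t₁ : ℝ := (K + α₂) * t / L with ht₁def
  have ht₁ : 0 ≤ t₁ := by positivity
  have ht₂ : 0 ≤ t₂ := by positivity
  have hsum : t₂ + t₁ = t := by
    rw [ht₂def, ht₁def, ← add_div, div_eq_iff hLpos.ne', hL]
    ring
  have hS : S t a = S t₂ (S t₁ a) := by
    have := hsemigroup t₂ t₁ ht₂ ht₁
    rw [hsum] at this
    rw [this]; rfl
  have hexp1 : K * t₂ + (-α₁ * t₁) = -(α₁ * α₂ / L) * t := by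
    rw [ht₂def, ht₁def, hL]; field_simp [show K + α₁ + α₂ ≠ 0 from hLpos.ne']; ring
  have hexp2 : -α₂ * t₂ = -(α₁ * α₂ / L) * t := by
    rw [ht₂def]; ring
  apply le_of_forall_pos_le_add
  intro ε hε
  set D : ℝ := C * Real.exp (K * t₂) with hD
  have hD0 : 0 ≤ D := by positivity
  have hDpos : 0 < D + 1 := by positivity
  have hε' : 0 < ε / (D + 1) := by positivity
  have h1 : infDist (S t₁ a) M₂ < C₁ * Real.exp (-α₁ * t₁) + ε / (D + 1) :=
    lt_of_le_of_lt (hattr₁ t₁ ht₁ a ha) (by linarith)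
  obtain ⟨b, hbM₂, hb⟩ := (infDist_lt_iff hM₂).mp h1
  have key : infDist (S t a) M₃ ≤ infDist (S t₂ b) M₃ + dist (S t a) (S t₂ b) :=
    infDist_le_infDist_add_dist
  have h2 : dist (S t a) (S t₂ b) ≤ D * (C₁ * Real.exp (-α₁ * t₁)) + D * (ε / (D + 1)) := by
    rw [hS, ← mul_add]
    calc dist (S t₂ (S t₁ a)) (S t₂ b) ≤ C * Real.exp (K * t₂) * dist (S t₁ a) b :=
          hLip t₂ ht₂ _ _
      _ ≤ D * (C₁ * Real.exp (-α₁ * t₁) + ε / (D + 1)) :=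
          mul_le_mul_of_nonneg_left hb.le hD0
  have h3 : infDist (S t₂ b) M₃ ≤ C₂ * Real.exp (-(α₁ * α₂ / L) * t) := by
    have := hattr₂ t₂ ht₂ b hbM₂
    rwa [hexp2] at this
  have hE : D * (C₁ * Real.exp (-α₁ * t₁)) = C * C₁ * Real.exp (-(α₁ * α₂ / L) * t) := by
    rw [hD, ← hexp1, Real.exp_add]; ring
  have hDε : D * (ε / (D + 1)) ≤ ε := by
    calc D * (ε / (D + 1)) ≤ (D + 1) * (ε / (D + 1)) := by
          apply mul_le_mul_of_nonneg_right (by linarith) hε'.le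
      _ = ε := by field_simp
  have : (C * C₁ + C₂) * Real.exp (-(α₁ * α₂ / L) * t)
      = C₂ * Real.exp (-(α₁ * α₂ / L) * t) + C * C₁ * Real.exp (-(α₁ * α₂ / L) * t) := by ring
  linarith [key, h2, h3, hE, hDε]
end
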